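/- arXiv:1307.5522 — 2 statements merged into one kernel-verified Lean document; each statement's English description precedes it below -/
import Mathlib

section
/- Let σ ∈ Sym_∞ be the transposition exchanging 1 and 2 and fixing all other integers, and let δ ∈ Sym_∞ be the translation δ(i) = i + 1 for all i ∈ ℤ. Then the subgroup N of Sym_∞ generated by σ and δ is not a Jordan group. -/
/-!
Conjugating `(1 2)` by powers of the translation gives every adjacent transposition
`(k k+1)`, hence every transposition, so the group contains every finitary permutation of `ℤ`;
in particular it contains a copy of the alternating group `A_n` for every `n`. For `n ≥ 5` the
group `A_n` is simple and non-abelian, so its only abelian normal subgroup is trivial and has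
index `n!/2`, which is unbounded in `n`.
-/

/-- A group `G` is *Jordan with constant* `d` if every finite subgroup `K` of `G`
contains an abelian subgroup that is normal in `K` and has index at most `d` in `K`. -/
def IsJordanWith (G : Type*) [Group G] (d : ℕ) : Prop :=
  ∀ K : Subgroup G, Finite K →
    ∃ A : Subgroup K, A.Normal ∧ IsMulCommutative A ∧ A.index ≤ d

/-- A group `G` is *Jordan* if some positive integer `d` witnesses the Jordan property. -/
def IsJordanGroup (G : Type*) [Group G] : Prop :=
  ∃ d : ℕ, 0 < d ∧ IsJordanWith G d

open Equiv Equiv.Perm Subgroup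

theorem Equiv.Perm.viaEmbedding_swap {α β : Type*} [DecidableEq α] [DecidableEq β] (ι : α ↪ β)
    (a b : α) : (swap a b).viaEmbedding ι = swap (ι a) (ι b) := by
  ext x
  by_cases hx : x ∈ Set.range ι
  · obtain ⟨y, rfl⟩ := hx
    rw [viaEmbedding_apply, swap_apply_def, swap_apply_def]
    simp only [ι.injective.eq_iff]
    split_ifs <;> rfl
  · rw [viaEmbedding_apply_of_notMem _ _ _ hx,
      swap_apply_of_ne_of_ne (fun h => hx ⟨a, h.symm⟩) (fun h => hx ⟨b, h.symm⟩)]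

theorem Equiv.Perm.range_viaEmbeddingHom_le_closure_isSwap {α β : Type*} [Finite α]
    [DecidableEq α] [DecidableEq β] (ι : α ↪ β) :
    (viaEmbeddingHom ι).range ≤ closure {σ : Perm β | σ.IsSwap} := by
  rw [MonoidHom.range_eq_map, ← closure_isSwap, MonoidHom.map_closure, closure_le]
  rintro _ ⟨_, ⟨a, b, hab, rfl⟩, rfl⟩
  exact subset_closure ⟨ι a, ι b, ι.injective.ne hab, viaEmbedding_swap ι a b⟩

section

variable {H : Subgroup (Perm ℤ)}

theorem swap_add_one_mem_of_addRight_one_mem (hδ : (Equiv.addRight 1 : Perm ℤ) ∈ H)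
    (hσ : swap (1 : ℤ) 2 ∈ H) (k : ℤ) : swap k (k + 1) ∈ H := by
  induction k using Int.inductionOn' (b := 1) with
  | zero => exact hσ
  | succ k _ ih =>
    have h := swap_apply_apply (Equiv.addRight 1 : Perm ℤ) k (k + 1)
    simp only [coe_addRight] at h
    rw [h]
    exact mul_mem (mul_mem hδ ih) (inv_mem hδ)
  | pred k _ ih =>
    have h := swap_apply_apply (Equiv.addRight 1 : Perm ℤ)⁻¹ k (k + 1)
    rw [inv_inv] at h
    convert mul_mem (mul_mem (inv_mem hδ) ih) hδ using 1
    rw [← h]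
    simp [Perm.inv_def, sub_eq_add_neg]

theorem swap_mem_of_forall_swap_add_one_mem (h : ∀ k : ℤ, swap k (k + 1) ∈ H) (i j : ℤ) :
    swap i j ∈ H := by
  wlog hij : i ≤ j
  · rw [swap_comm]; exact this h j i (by omega)
  induction j, hij using Int.leInduction with
  | base => rw [swap_self]; exact one_mem H
  | succ j _ ih => exact SubmonoidClass.swap_mem_trans H ih (h j)

theorem closure_isSwap_le_of_addRight_one_mem (hδ : (Equiv.addRight 1 : Perm ℤ) ∈ H)
    (hσ : swap (1 : ℤ) 2 ∈ H) : closure {σ : Perm ℤ | σ.IsSwap} ≤ H := by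
  rw [closure_le]
  rintro _ ⟨i, j, -, rfl⟩
  exact swap_mem_of_forall_swap_add_one_mem (swap_add_one_mem_of_addRight_one_mem hδ hσ) i j

end

theorem Subgroup.eq_bot_of_normal_of_isMulCommutative {G : Type*} [Group G] [IsSimpleGroup G]
    (hG : ¬IsMulCommutative G) {A : Subgroup G} (hA : A.Normal) [IsMulCommutative A] : A = ⊥ := by
  refine (IsSimpleGroup.eq_bot_or_eq_top_of_normal A hA).resolve_right ?_
  rintro rfl
  exact hG ⟨⟨fun a b => setLike_mul_comm (s := (⊤ : Subgroup G)) (mem_top a) (mem_top b)⟩⟩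

theorem IsJordanWith.exists_abelian_normal_of_injective {G K : Type*} [Group G] [Group K]
    [Finite K] {d : ℕ} (hJ : IsJordanWith G d) {f : K →* G} (hf : Function.Injective f) :
    ∃ A : Subgroup K, A.Normal ∧ IsMulCommutative A ∧ A.index ≤ d := by
  have : Finite f.range := Finite.of_surjective _ f.rangeRestrict_surjective
  obtain ⟨A, hAn, hAc, hAd⟩ := hJ f.range this
  let e : K ≃* f.range := MonoidHom.ofInjective hf
  exact ⟨A.comap e.toMonoidHom, hAn.comap _, A.comap_injective_isMulCommutative e.injective,
    (A.index_comap_of_surjective e.surjective).trans_le hAd⟩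

theorem IsJordanWith.card_le_of_injective {G K : Type*} [Group G] [Group K] [Finite K]
    [IsSimpleGroup K] (hK : ¬IsMulCommutative K) {d : ℕ} (hJ : IsJordanWith G d)
    {f : K →* G} (hf : Function.Injective f) : Nat.card K ≤ d := by
  obtain ⟨A, hAn, hAc, hAd⟩ := hJ.exists_abelian_normal_of_injective hf
  rwa [eq_bot_of_normal_of_isMulCommutative hK hAn, index_bot] at hAd

/-- The subgroup of `Sym(ℤ)` generated by the transposition `(1 2)` and the translation
`i ↦ i + 1` is not Jordan. -/
theorem not_isJordanGroup_closure_swap_translation :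
    ¬ IsJordanGroup
      (Subgroup.closure {Equiv.swap (1 : ℤ) 2, (Equiv.addRight (1 : ℤ) : Equiv.Perm ℤ)}) := by
  rintro ⟨d, -, hJ⟩
  set N := closure {swap (1 : ℤ) 2, (Equiv.addRight 1 : Perm ℤ)}
  let n := 2 * d + 5
  let ι : Fin n ↪ ℤ := Fin.valEmbedding.trans Nat.castEmbedding
  have hrange : (viaEmbeddingHom ι).range ≤ N :=
    (range_viaEmbeddingHom_le_closure_isSwap ι).trans
      (closure_isSwap_le_of_addRight_one_mem (subset_closure (by simp)) (subset_closure (by simp)))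
  let f : alternatingGroup (Fin n) →* N :=
    ((viaEmbeddingHom ι).comp (alternatingGroup (Fin n)).subtype).codRestrict N
      fun g => hrange ⟨_, rfl⟩
  have hf : Function.Injective f := (MonoidHom.injective_codRestrict _ _ _).2
    ((viaEmbeddingHom_injective ι).comp Subtype.val_injective)
  have hsimple : IsSimpleGroup (alternatingGroup (Fin n)) :=
    alternatingGroup.isSimpleGroup (by simp [n])
  have hcard := hJ.card_le_of_injective
    (by simp [alternatingGroup.isMulCommutative_iff_card_le_three, n]) hf
  have h2 : 2 * Nat.card (alternatingGroup (Fin n)) = n.factorial := by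
    rw [two_mul_nat_card_alternatingGroup, Nat.card_perm, Nat.card_fin]
  have hn := Nat.self_le_factorial n
  omega
end

section
/- Let H be a finite normal subgroup of a group G such that the center of H is trivial. If G/H is Jordan, then G is Jordan; moreover, if every finite subgroup of G/H contains an abelian normal subgroup of index at most j, and a = |Aut(H)| is the order of the automorphism group of H, then every finite subgroup F of G contains an abelian subgroup normal in F of index at most a · j^a. In particular J_G ≤ |Aut(H)| · (J_{G/H})^{|Aut(H)|}. -/
/-!
The centralizer `N` of `H` in `G` is the kernel of the conjugation map `G → Aut(H)`, so it is a
normal subgroup of index at most `|Aut(H)|`; since `N ∩ H = Z(H) = 1`, it embeds into `G ⧸ H`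
and is therefore Jordan with constant `j`. In general, if a normal subgroup `N` of index `≤ n`
is Jordan with constant `d`, then so is `G` with constant `n * d ^ n`: for a finite `K ≤ G`, take
an abelian `A ⊴ K ∩ N` of index `≤ d`; its normal core in `K` is the intersection of at most
`[K : K ∩ N] ≤ n` conjugates, each of index `≤ d` in `K ∩ N`.
-/

namespace Subgroup

variable {G : Type*} [Group G]

theorem map_conj_mul_eq_of_mem_normalizer {A : Subgroup G} {c : G}
    (hc : c ∈ normalizer (A : Set G)) (g : G) :
    A.map (MulAut.conj (g * c) : G →* G) = A.map (MulAut.conj g : G →* G) := by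
  rw [mem_normalizer_iff_map_conj_eq] at hc
  rw [map_mul, MulAut.mul_def]
  simp [← map_map, hc]

theorem index_normalCore_le {A C : Subgroup G} [C.Normal] [C.FiniteIndex] (hAC : A ≤ C)
    (hCA : C ≤ normalizer (A : Set G)) :
    A.normalCore.index ≤ C.index * A.relIndex C ^ C.index := by
  have : Fintype (G ⧸ C) := Fintype.ofFinite _
  let conjOf : G ⧸ C → Subgroup G := fun q => A.map (MulAut.conj q.out : G →* G)
  have hconj (g : G) : A.map (MulAut.conj g : G →* G) = conjOf g := by
    obtain ⟨c, hc, hout⟩ : ∃ c ∈ C, (g : G ⧸ C).out = g * c :=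
      ⟨g⁻¹ * (g : G ⧸ C).out, QuotientGroup.eq.mp (by simp), by group⟩
    simp only [conjOf, hout, map_conj_mul_eq_of_mem_normalizer (hCA hc)]
  have hcore : A.normalCore = ⨅ q : G ⧸ C, conjOf q := by
    rw [normalCore_eq_iInf_map_conj]
    exact le_antisymm (le_iInf fun q => iInf_le _ q.out)
      (le_iInf fun g => hconj g ▸ iInf_le _ _)
  have hrel (g : G) : (A.map (MulAut.conj g : G →* G)).relIndex C = A.relIndex C := by
    conv_lhs => rw [← Normal.map_conj_eq C g]
    exact relIndex_map_map_of_injective A C (MulAut.conj g).injective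
  calc A.normalCore.index = A.normalCore.relIndex C * C.index :=
        (relIndex_mul_index (A.normalCore_le.trans hAC)).symm
    _ ≤ (∏ q : G ⧸ C, (conjOf q).relIndex C) * C.index := by
        rw [hcore]
        gcongr
        exact relIndex_iInf_le _
    _ = C.index * A.relIndex C ^ C.index := by
        simp only [conjOf, hrel, Finset.prod_const, Finset.card_univ, index_eq_card,
          Nat.card_eq_fintype_card, mul_comm]

theorem disjoint_centralizer_of_center_eq_bot {H : Subgroup G} (hH : center H = ⊥) :
    Disjoint (centralizer (H : Set G)) H := by
  rw [disjoint_iff_inf_le]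
  rintro x ⟨hxC, hxH⟩
  have : (⟨x, hxH⟩ : H) ∈ center H :=
    mem_center_iff.mpr fun y => Subtype.ext (hxC y y.2)
  simpa [hH] using this

variable (H : Subgroup G) [H.Normal]

theorem ker_conjNormal :
    (MulAut.conjNormal : G →* MulAut H).ker = centralizer (H : Set G) := by
  ext g
  simp [DFunLike.ext_iff, Subtype.ext_iff, MulAut.conjNormal_apply, mem_centralizer_iff,
    eq_mul_inv_iff_mul_eq, eq_comm]

variable [Finite H]

instance finiteIndex_centralizer : (centralizer (H : Set G)).FiniteIndex :=
  ker_conjNormal H ▸ finiteIndex_ker _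

theorem index_centralizer_le : (centralizer (H : Set G)).index ≤ Nat.card (MulAut H) := by
  rw [← ker_conjNormal, index_ker]
  exact card_le_card_group _

end Subgroup

theorem QuotientGroup.injective_mk'_comp_subtype {G : Type*} [Group G] {N H : Subgroup G}
    [H.Normal] (h : Disjoint N H) : Function.Injective ((QuotientGroup.mk' H).comp N.subtype) := by
  rw [← MonoidHom.ker_eq_bot_iff, ← MonoidHom.comap_ker, QuotientGroup.ker_mk']
  exact Subgroup.subgroupOf_eq_bot.mpr h.symm

namespace IsJordanWith

open Subgroup

variable {G : Type*} [Group G] {d : ℕ}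

theorem pos (hG : IsJordanWith G d) : 0 < d := by
  obtain ⟨A, -, -, hA⟩ := hG ⊥ inferInstance
  exact (Nat.pos_of_ne_zero A.index_ne_zero_of_finite).trans_le hA

theorem isJordanGroup (hG : IsJordanWith G d) : IsJordanGroup G :=
  ⟨d, hG.pos, hG⟩

theorem exists_of_injective {K : Type*} [Group K] [Finite K] (hG : IsJordanWith G d)
    {f : K →* G} (hf : Function.Injective f) :
    ∃ A : Subgroup K, A.Normal ∧ IsMulCommutative A ∧ A.index ≤ d := by
  let e : K ≃* f.range := MonoidHom.ofInjective hf
  obtain ⟨A, hAn, hAc, hAi⟩ := hG f.range (Finite.of_equiv K e.toEquiv)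
  refine ⟨A.comap e.toMonoidHom, hAn.comap _, A.comap_injective_isMulCommutative e.injective, ?_⟩
  rwa [A.index_comap_of_surjective (f := e.toMonoidHom) e.surjective]

theorem of_injective {K : Type*} [Group K] (hG : IsJordanWith G d) {f : K →* G}
    (hf : Function.Injective f) : IsJordanWith K d :=
  fun L _ => hG.exists_of_injective (f := f.comp L.subtype) (hf.comp Subtype.val_injective)

theorem of_normal_of_index_le {N : Subgroup G} [N.Normal] [N.FiniteIndex] {n : ℕ}
    (hN : IsJordanWith N d) (hNn : N.index ≤ n) : IsJordanWith G (n * d ^ n) := by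
  intro K _
  set C := N.subgroupOf K
  let ι : C →* N := (K.subtype.comp C.subtype).codRestrict N fun x => x.2
  obtain ⟨A, hAn, hAc, hAi⟩ := hN.exists_of_injective (f := ι) fun x y hxy =>
    Subtype.ext <| Subtype.ext (congrArg Subtype.val hxy :)
  set A' := A.map C.subtype
  have hA'C : A'.subgroupOf C = A := comap_map_eq_self_of_injective C.subtype_injective A
  have : (A'.subgroupOf C).Normal := hA'C ▸ hAn
  have hCn : C.index ≤ n :=
    (Nat.le_of_dvd (Nat.pos_of_ne_zero FiniteIndex.index_ne_zero)
      (relIndex_dvd_index_of_normal N K)).trans hNn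
  refine ⟨A'.normalCore, normalCore_normal _, ?_, ?_⟩
  · exact .of_setLike_mul_comm fun x hx y hy => by
      obtain ⟨x, hx', rfl⟩ := A'.normalCore_le hx
      obtain ⟨y, hy', rfl⟩ := A'.normalCore_le hy
      simpa using congr(C.subtype $(setLike_mul_comm hx' hy'))
  · calc A'.normalCore.index ≤ C.index * A'.relIndex C ^ C.index :=
          index_normalCore_le (map_subtype_le A)
            (le_normalizer_of_normal_subgroupOf (map_subtype_le A))
      _ ≤ n * d ^ n := by
          rw [relIndex, hA'C]
          gcongr
          exact hN.pos

end IsJordanWith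

theorem isJordanGroup_of_quotient_by_centerless_general {G : Type*} [Group G] (H : Subgroup G)
    [H.Normal] [Finite H] (hcenter : Subgroup.center H = ⊥)
    (j : ℕ) (hQ : IsJordanWith (G ⧸ H) j) :
    IsJordanGroup G ∧
    IsJordanWith G (Nat.card (MulAut H) * j ^ Nat.card (MulAut H)) := by
  have hN : IsJordanWith (Subgroup.centralizer (H : Set G)) j :=
    hQ.of_injective <| QuotientGroup.injective_mk'_comp_subtype <|
      Subgroup.disjoint_centralizer_of_center_eq_bot hcenter
  have hG := hN.of_normal_of_index_le (Subgroup.index_centralizer_le H)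
  exact ⟨hG.isJordanGroup, hG⟩

/-- If `H` is a finite normal subgroup of `G` with trivial center and `G ⧸ H` is Jordan
with witness `j`, then `G` is Jordan with witness `a * j ^ a`, where `a = |Aut H|`. -/
theorem isJordanGroup_of_quotient_by_centerless {G : Type*} [Group G] (H : Subgroup G)
    [H.Normal] [Finite H] (hcenter : Subgroup.center H = ⊥)
    (j : ℕ) (hj : 0 < j) (hQ : IsJordanWith (G ⧸ H) j) :
    IsJordanGroup G ∧
    IsJordanWith G (Nat.card (MulAut H) * j ^ Nat.card (MulAut H)) :=
  isJordanGroup_of_quotient_by_centerless_general H hcenter j hQ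
end
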